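/- (Support monotonicity) Let G be a DAG with topological order v_1,...,v_n, G_i = G[{v_1,...,v_i}], and let S_i be the union of all frontier antichains of G_i. If v ∈ {v_1,...,v_i} and v ∉ S_i, then v ∉ S_j for all j ≥ i. -/

import Mathlib

open Relation

/-- A directed graph (edge relation `E`) is acyclic. -/
def Acyclic {V : Type*} (E : V → V → Prop) : Prop := ∀ v, ¬ TransGen E v v

/-- `A` is an antichain: its vertices are pairwise non-reachable
(reachability = reflexive-transitive closure of `E`). -/
def IsAC {V : Type*} (E : V → V → Prop) (A : Finset V) : Prop :=
  ∀ a ∈ A, ∀ b ∈ A, a ≠ b → ¬ ReflTransGen E a b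

/-- `B` dominates `A`: same size, and every vertex of `B` is reachable from some vertex of `A`. -/
def Dom {V : Type*} (E : V → V → Prop) (B A : Finset V) : Prop :=
  B.card = A.card ∧ ∀ b ∈ B, ∃ a ∈ A, ReflTransGen E a b

/-- A frontier antichain: an antichain not dominated by any other antichain. -/
def Frontier {V : Type*} (E : V → V → Prop) (A : Finset V) : Prop :=
  IsAC E A ∧ ∀ B : Finset V, IsAC E B → B ≠ A → ¬ Dom E B A

/-- The identity order on `Fin n` is a topological order for `E`. -/
def Topo {n : ℕ} (E : Fin n → Fin n → Prop) : Prop := ∀ u v, E u v → (u : ℕ) < (v : ℕ)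

/-- The edge relation of the induced subgraph `G_i` on the first `i` vertices. -/
def Erest {n : ℕ} (E : Fin n → Fin n → Prop) (i : ℕ) (u v : Fin n) : Prop :=
  E u v ∧ (u : ℕ) < i ∧ (v : ℕ) < i

/-- `A` is a frontier antichain of the induced subgraph `G_i` on the first `i` vertices. -/
def FrontierIn {n : ℕ} (E : Fin n → Fin n → Prop) (i : ℕ) (A : Finset (Fin n)) : Prop :=
  (∀ a ∈ A, (a : ℕ) < i) ∧ IsAC (Erest E i) A ∧
  ∀ B : Finset (Fin n), (∀ b ∈ B, (b : ℕ) < i) → IsAC (Erest E i) B → B ≠ A →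
    ¬ Dom (Erest E i) B A

/-- The support `S_i`: union of all frontier antichains of `G_i`. -/
def SupportIn {n : ℕ} (E : Fin n → Fin n → Prop) (i : ℕ) : Set (Fin n) :=
  {v | ∃ A : Finset (Fin n), FrontierIn E i A ∧ v ∈ A}

/-!
Every edge goes forward in the topological order, so the new vertex `v_{j+1}` is a sink of
`G_{j+1}`. Hence if `A` is a frontier antichain of `G_{j+1}`, then `A ∖ {v_{j+1}}` is one of `G_j`:
an antichain `B` of `G_j` dominating it would give the antichain `B ∪ (A ∩ {v_{j+1}})` of `G_{j+1}`
dominating `A`. So `S_{j+1} ∩ V(G_j) ⊆ S_j`, and induction on `j` gives the claim.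
-/

open Finset

section Mono

variable {V : Type*} {E E' : V → V → Prop}

theorem IsAC.mono (hE : E' ≤ E) {A : Finset V} (hA : IsAC E A) : IsAC E' A :=
  fun a ha b hb hab hr => hA a ha b hb hab (ReflTransGen.mono hE _ _ hr)

theorem IsAC.subset {A B : Finset V} (hA : IsAC E A) (hBA : B ⊆ A) : IsAC E B :=
  fun a ha b hb => hA a (hBA ha) b (hBA hb)

end Mono

section Erest

variable {n : ℕ} {E : Fin n → Fin n → Prop} {i j : ℕ}

theorem Erest.mono (h : i ≤ j) : Erest E i ≤ Erest E j :=
  fun _ _ he => ⟨he.1, he.2.1.trans_le h, he.2.2.trans_le h⟩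

theorem Topo.reflTransGen_erest_of_succ (hE : Topo E) {a b : Fin n}
    (h : ReflTransGen (Erest E (j + 1)) a b) (hb : (b : ℕ) < j) :
    ReflTransGen (Erest E j) a b := by
  induction h with
  | refl => exact .refl
  | tail _ hcd ih =>
    have hc := (hE _ _ hcd.1).trans hb
    exact (ih hc).tail ⟨hcd.1, hc, hb⟩

theorem Topo.eq_of_reflTransGen_erest_succ (hE : Topo E) {w b : Fin n} (hw : (w : ℕ) = j)
    (h : ReflTransGen (Erest E (j + 1)) w b) : b = w := by
  rcases h.cases_head with h | ⟨c, hwc, -⟩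
  · exact h.symm
  · have := hE _ _ hwc.1
    have := hwc.2.2
    omega

theorem IsAC.erest_succ (hE : Topo E) {B : Finset (Fin n)} (hB : ∀ b ∈ B, (b : ℕ) < j)
    (hBac : IsAC (Erest E j) B) : IsAC (Erest E (j + 1)) B :=
  fun a ha b hb hab hr => hBac a ha b hb hab (hE.reflTransGen_erest_of_succ hr (hB b hb))

theorem IsAC.union_of_succ (hE : Topo E) {A B H : Finset (Fin n)}
    (hAac : IsAC (Erest E (j + 1)) A) (hHA : H ⊆ A) (hH : ∀ w ∈ H, (w : ℕ) = j)
    (hB : ∀ b ∈ B, (b : ℕ) < j) (hBac : IsAC (Erest E j) B)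
    (hreach : ∀ b ∈ B, ∃ a ∈ A, (a : ℕ) < j ∧ ReflTransGen (Erest E (j + 1)) a b) :
    IsAC (Erest E (j + 1)) (B ∪ H) := by
  intro x hx y hy hxy hr
  rcases mem_union.1 hx, mem_union.1 hy with ⟨hx | hx, hy | hy⟩
  · exact hBac.erest_succ hE hB x hx y hy hxy hr
  · obtain ⟨a, haA, ha, hax⟩ := hreach x hx
    exact hAac a haA y (hHA hy) (fun hay => by have := hH y hy; omega) (hax.trans hr)
  all_goals exact hxy (hE.eq_of_reflTransGen_erest_succ (hH x hx) hr).symm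

theorem FrontierIn.filter_lt_of_succ (hE : Topo E) {A : Finset (Fin n)}
    (hA : FrontierIn E (j + 1) A) : FrontierIn E j (A.filter fun a => (a : ℕ) < j) := by
  obtain ⟨hAlt, hAac, hAfr⟩ := hA
  have hle := Erest.mono (E := E) j.le_succ
  refine ⟨fun a ha => (mem_filter.1 ha).2, (hAac.subset (filter_subset _ _)).mono hle, ?_⟩
  rintro B hBlt hBac hBL ⟨hcard, hdom⟩
  set H := A.filter fun a : Fin n => ¬ (a : ℕ) < j
  have hH : ∀ w ∈ H, (w : ℕ) = j := fun w hw => by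
    have := hAlt w (filter_subset _ _ hw)
    have := (mem_filter.1 hw).2
    omega
  have hreach : ∀ b ∈ B, ∃ a ∈ A, (a : ℕ) < j ∧ ReflTransGen (Erest E (j + 1)) a b := by
    intro b hb
    obtain ⟨a, ha, hab⟩ := hdom b hb
    exact ⟨a, (mem_filter.1 ha).1, (mem_filter.1 ha).2, ReflTransGen.mono hle _ _ hab⟩
  have hBH : Disjoint B H := disjoint_left.2 fun b hb hbH => by
    have := hH b hbH
    have := hBlt b hb
    omega
  refine hAfr (B ∪ H) ?_ (hAac.union_of_succ hE (filter_subset _ _) hH hBlt hBac hreach)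
    ?_ ⟨?_, ?_⟩
  · intro b hb
    rcases mem_union.1 hb with hb | hb
    · exact (hBlt b hb).trans j.lt_succ_self
    · exact hAlt b (filter_subset _ _ hb)
  · intro hBHA
    apply hBL
    rw [← hBHA, filter_union, filter_true_of_mem hBlt,
      filter_false_of_mem fun w hw => (mem_filter.1 hw).2, union_empty]
  · rw [card_union_of_disjoint hBH, hcard, card_filter_add_card_filter_not]
  · intro b hb
    rcases mem_union.1 hb with hb | hb
    · obtain ⟨a, ha, -, hab⟩ := hreach b hb
      exact ⟨a, ha, hab⟩
    · exact ⟨b, filter_subset _ _ hb, .refl⟩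

theorem mem_supportIn_of_mem_supportIn_succ (hE : Topo E) {v : Fin n} (hv : (v : ℕ) < j)
    (h : v ∈ SupportIn E (j + 1)) : v ∈ SupportIn E j :=
  let ⟨_, hA, hvA⟩ := h
  ⟨_, hA.filter_lt_of_succ hE, mem_filter.2 ⟨hvA, hv⟩⟩

theorem mem_supportIn_of_le (hE : Topo E) {v : Fin n} (hv : (v : ℕ) < i) (hij : i ≤ j)
    (h : v ∈ SupportIn E j) : v ∈ SupportIn E i := by
  induction j, hij using Nat.le_induction with
  | base => exact h
  | succ j hij ih => exact ih (mem_supportIn_of_mem_supportIn_succ hE (hv.trans_le hij) h)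

end Erest

theorem support_monotone_general {n : ℕ} (E : Fin n → Fin n → Prop) (hE : Topo E)
    (i j : ℕ) (hij : i ≤ j)
    (v : Fin n) (hv : (v : ℕ) < i) (h : v ∉ SupportIn E i) :
    v ∉ SupportIn E j :=
  fun hvj => h (mem_supportIn_of_le hE hv hij hvj)

/-- support monotonicity: a vertex that leaves the support never re-enters. -/
theorem support_monotone {n : ℕ} (E : Fin n → Fin n → Prop) (hE : Topo E)
    (i j : ℕ) (hij : i ≤ j) (hj : j ≤ n)
    (v : Fin n) (hv : (v : ℕ) < i) (h : v ∉ SupportIn E i) :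
    v ∉ SupportIn E j :=
  support_monotone_general E hE i j hij v hv h
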